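/- arXiv:1802.02910 — 3 statements merged into one kernel-verified Lean document; each statement's English description precedes it below -/
import Mathlib

section
/- Let X be a real inner product space-like lattice with a symmetric bilinear form, let K = -3ℓ + e_0 + e_1 + ⋯ + e_8 where ℓ·ℓ = 1, e_i·e_i = -1, and all distinct basis elements are pairwise orthogonal, and let a = n(e_1 - e_0) + m(e_2 - e_0) for integers n, m. Define τ_a(d) = d - (K·d)·a + (a·d - (1/2)(K·d)(a·a))·K. Then τ_a(ℓ)·ℓ = 9(n^2 + m^2 + nm) + 1. -/
/-- Degree of the Eichler transvection (Halphen twist) `τ_a` applied to the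
line class: in a lattice with basis `ℓ, e₀, …, e₈` (`ℓ·ℓ = 1`, `eᵢ·eᵢ = -1`,
pairwise orthogonal), with `K = -3ℓ + Σ eᵢ` and
`a = n(e₁ - e₀) + m(e₂ - e₀)`, one has `τ_a(ℓ)·ℓ = 9(n² + m² + nm) + 1`. -/
theorem stmt3 (V : Type*) [AddCommGroup V] [Module ℝ V]
    (B : LinearMap.BilinForm ℝ V) (hsymm : ∀ x y, B x y = B y x)
    (l : V) (e : Fin 9 → V)
    (hll : B l l = 1)
    (hee : ∀ i, B (e i) (e i) = -1)
    (heij : ∀ i j, i ≠ j → B (e i) (e j) = 0)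
    (hle : ∀ i, B l (e i) = 0)
    (n m : ℤ)
    (K : V) (hK : K = (-3 : ℝ) • l + ∑ i, e i)
    (a : V) (ha : a = (n : ℝ) • (e 1 - e 0) + (m : ℝ) • (e 2 - e 0))
    (τ : V → V)
    (hτ : ∀ d, τ d = d - (B K d) • a + ((B a d) - (1 / 2) * (B K d) * (B a a)) • K) :
    B (τ l) l = 9 * ((n : ℝ) ^ 2 + (m : ℝ) ^ 2 + (n : ℝ) * (m : ℝ)) + 1 := by
  have hel : ∀ i, B (e i) l = 0 := fun i => (hsymm (e i) l).trans (hle i)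
  have h01 : B (e 0) (e 1) = 0 := heij 0 1 (by decide)
  have h02 : B (e 0) (e 2) = 0 := heij 0 2 (by decide)
  have h10 : B (e 1) (e 0) = 0 := heij 1 0 (by decide)
  have h12 : B (e 1) (e 2) = 0 := heij 1 2 (by decide)
  have h20 : B (e 2) (e 0) = 0 := heij 2 0 (by decide)
  have h21 : B (e 2) (e 1) = 0 := heij 2 1 (by decide)
  have hKl : B K l = -3 := by
    rw [hK]
    simp [map_add, map_sum, map_smul, hll, hel]
  have hal : B a l = 0 := by
    rw [ha]
    simp [map_add, map_sub, map_smul, hel]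
  have haa : B a a = -2 * ((n : ℝ) ^ 2 + (n : ℝ) * (m : ℝ) + (m : ℝ) ^ 2) := by
    rw [ha]
    simp [map_add, map_sub, map_smul, hee, h01, h02, h10, h12, h20, h21]
    ring
  rw [hτ l]
  simp only [map_add, map_sub, map_smul, LinearMap.add_apply, LinearMap.sub_apply,
    LinearMap.smul_apply, smul_eq_mul, hKl, hal, haa, hll]
  ring
end

section
/- In the hyperbolic metric d(c, c') = arcosh(c · c') on the hyperboloid, suppose c₁ and c₂ are points with d(c₁, c₂) ≤ ε, and ℓ, w are points satisfying d(c₁, ℓ) ≤ d(c₁, w) and d(c₂, w) ≤ d(c₂, ℓ). Then 1 - (c₁ · ℓ)/(c₁ · w) ≤ 2ε, where x · y = cosh(d(x,y)). -/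
/-! Moving from `ℓ` to `w` changes the distance to `c₂` by at most zero and the distance to `c₁`
by at most `2ε`, so `0 ≤ d(c₁, w) - d(c₁, ℓ) ≤ 2ε`. The ratio `cosh a / cosh b` of two values of
`cosh` at `a ≤ b` is at least `1 - (b - a)`, which is the concavity bound for `arcosh`. -/

open Real

lemma dist_sub_dist_le_two_mul_dist {X : Type*} [PseudoMetricSpace X] {x y l w : X}
    (h : dist y w ≤ dist y l) : dist x w - dist x l ≤ 2 * dist x y := by
  have hw : dist x w ≤ dist x y + dist y w := dist_triangle x y w
  have hl : dist y l ≤ dist x y + dist x l := dist_triangle_left y l x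
  linarith

namespace Real

/-- Writing `a = b - d`, the left side is `cosh b (1 - cosh d) + sinh b sinh d`, which is at most
`cosh b (1 - exp (-d)) ≤ d cosh b`. -/
lemma cosh_sub_cosh_le_mul_cosh {a b : ℝ} (hab : a ≤ b) :
    cosh b - cosh a ≤ (b - a) * cosh b := by
  have hd : 0 ≤ sinh (b - a) := sinh_nonneg_iff.2 (sub_nonneg.2 hab)
  have hcosh_a : cosh a = cosh b * cosh (b - a) - sinh b * sinh (b - a) := by
    rw [← cosh_sub, sub_sub_cancel]
  have hexp : cosh (b - a) - sinh (b - a) = exp (-(b - a)) := cosh_sub_sinh _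
  nlinarith [mul_le_mul_of_nonneg_right (sinh_lt_cosh b).le hd, add_one_le_exp (-(b - a)),
    cosh_pos b]

lemma one_sub_cosh_div_cosh_le {a b : ℝ} (hab : a ≤ b) : 1 - cosh a / cosh b ≤ b - a := by
  rw [one_sub_div (cosh_pos b).ne', div_le_iff₀ (cosh_pos b)]
  exact cosh_sub_cosh_le_mul_cosh hab

end Real

/-- In the hyperboloid model, where the pairing is `x · y = cosh (d x y)`:
if `d(c₁, c₂) ≤ ε`, `d(c₁, ℓ) ≤ d(c₁, w)` and `d(c₂, w) ≤ d(c₂, ℓ)`, then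
`1 - (c₁ · ℓ)/(c₁ · w) ≤ 2ε`. -/
theorem stmt9 (H : Type*) [MetricSpace H] (l w c₁ c₂ : H) (ε : ℝ)
    (pairing : H → H → ℝ)
    (hpair : ∀ x y : H, pairing x y = Real.cosh (dist x y))
    (h12 : dist c₁ c₂ ≤ ε)
    (h1 : dist c₁ l ≤ dist c₁ w)
    (h2 : dist c₂ w ≤ dist c₂ l) :
    1 - pairing c₁ l / pairing c₁ w ≤ 2 * ε := by
  rw [hpair, hpair]
  calc 1 - cosh (dist c₁ l) / cosh (dist c₁ w) ≤ dist c₁ w - dist c₁ l :=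
        one_sub_cosh_div_cosh_le h1
    _ ≤ 2 * dist c₁ c₂ := dist_sub_dist_le_two_mul_dist h2
    _ ≤ 2 * ε := by linarith
end

section
/- Let d ≥ 2 and let (m_p) be positive integers indexed by a finite multiset with Σ_p m_p = 3(d-1) and m_p ≤ d - 1 for all p. Then the multiset in which each p appears m_p times can be partitioned into d - 1 triples, each consisting of three pairwise distinct indices p. -/
theorem aux13 (ι : Type*) [DecidableEq ι] :
    ∀ n (s : Finset ι) (m : ι → ℕ),
    (∀ p ∈ s, m p ≤ n) → (∑ p ∈ s, m p = 3 * n) →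
    ∃ T : Multiset (Multiset ι),
      Multiset.card T = n ∧
      (∀ t ∈ T, Multiset.card t = 3 ∧ t.Nodup) ∧
      T.sum = ∑ p ∈ s, Multiset.replicate (m p) p := by
  intro n
  induction n with
  | zero =>
    intro s m hle hsum
    refine ⟨0, rfl, by simp, ?_⟩
    have : ∑ p ∈ s, Multiset.replicate (m p) p = ∑ p ∈ s, (0 : Multiset ι) :=
      Finset.sum_congr rfl (fun p hp => by
        have : m p = 0 := Nat.le_zero.mp (hle p hp)
        simp [this])
    simp [this]
  | succ n ih =>
    intro s m hle hsum
    set P := s.filter (fun p => 1 ≤ m p) with hPdef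
    set F := s.filter (fun p => m p = n + 1) with hFdef
    have hFP : F ⊆ P := by
      intro p hp
      rw [hFdef, Finset.mem_filter] at hp
      rw [hPdef, Finset.mem_filter]
      exact ⟨hp.1, by omega⟩
    have hsumP : ∑ p ∈ P, m p = 3 * (n + 1) := by
      rw [hPdef, Finset.sum_filter_of_ne, hsum]
      intro x hx hne; omega
    have hPcard : 3 ≤ P.card := by
      have h1 : ∑ p ∈ P, m p ≤ P.card * (n + 1) :=
        Finset.sum_le_card_nsmul P m (n + 1)
          (fun p hp => hle p (Finset.mem_filter.mp hp).1)
      rw [hsumP] at h1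
      exact Nat.le_of_mul_le_mul_right h1 (by omega)
    have hFcard : F.card ≤ 3 := by
      have h1 : ∑ p ∈ F, m p = F.card * (n + 1) := by
        rw [Finset.sum_congr rfl (fun p hp => (Finset.mem_filter.mp hp).2),
          Finset.sum_const, smul_eq_mul]
      have h2 : ∑ p ∈ F, m p ≤ ∑ p ∈ s, m p :=
        Finset.sum_le_sum_of_subset (Finset.filter_subset _ _)
      rw [h1, hsum] at h2
      exact Nat.le_of_mul_le_mul_right h2 (by omega)
    obtain ⟨t, htF, htP, htcard⟩ := Finset.exists_subsuperset_card_eq hFP hFcard hPcard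
    have hts : t ⊆ s := htP.trans (Finset.filter_subset _ _)
    have htpos : ∀ p ∈ t, 1 ≤ m p := fun p hp => (Finset.mem_filter.mp (htP hp)).2
    set m' : ι → ℕ := fun p => if p ∈ t then m p - 1 else m p with hm'def
    have hle' : ∀ p ∈ s, m' p ≤ n := by
      intro p hp
      by_cases h : p ∈ t
      · have := hle p hp; simp only [hm'def, if_pos h]; omega
      · have hne : m p ≠ n + 1 := fun heq => h (htF (Finset.mem_filter.mpr ⟨hp, heq⟩))
        have := hle p hp; simp only [hm'def, if_neg h]; omega
    have hst : s ∩ t = t := Finset.inter_eq_right.mpr hts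
    have hsum' : ∑ p ∈ s, m' p = 3 * n := by
      have key : ∑ p ∈ s, m p = ∑ p ∈ s, (m' p + if p ∈ t then 1 else 0) := by
        refine Finset.sum_congr rfl (fun p hp => ?_)
        by_cases h : p ∈ t
        · have := htpos p h; simp only [hm'def, if_pos h]; omega
        · simp [hm'def, if_neg h]
      rw [Finset.sum_add_distrib, Finset.sum_ite_mem, hst, Finset.sum_const,
        smul_eq_mul, mul_one, htcard, hsum] at key
      omega
    obtain ⟨T', hT'card, hT'mem, hT'sum⟩ := ih s m' hle' hsum'
    refine ⟨t.val ::ₘ T', by simp [hT'card], ?_, ?_⟩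
    · intro u hu
      rcases Multiset.mem_cons.mp hu with h | h
      · subst h; exact ⟨htcard, t.nodup⟩
      · exact hT'mem u h
    · rw [Multiset.sum_cons, hT'sum]
      have key : ∑ p ∈ s, Multiset.replicate (m p) p
          = ∑ p ∈ s, ((if p ∈ t then ({p} : Multiset ι) else 0)
              + Multiset.replicate (m' p) p) := by
        refine Finset.sum_congr rfl (fun p hp => ?_)
        by_cases h : p ∈ t
        · have h1 := htpos p h
          simp only [hm'def, if_pos h]
          have : m p = (m p - 1) + 1 := by omega
          rw [this, Multiset.replicate_succ]
          rfl
        · simp [hm'def, if_neg h]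
      rw [key, Finset.sum_add_distrib, Finset.sum_ite_mem, hst,
        Finset.sum_multiset_singleton]

/-- Partition lemma from the Noether equations: if positive multiplicities
`m_p` on a finite index set satisfy `Σ m_p = 3(d-1)` and `m_p ≤ d-1`, then the
multiset in which each `p` appears `m_p` times can be partitioned into `d - 1`
triples of pairwise distinct indices. -/
theorem stmt13 (ι : Type*) [DecidableEq ι] (d : ℕ) (hd : 2 ≤ d)
    (s : Finset ι) (m : ι → ℕ)
    (hpos : ∀ p ∈ s, 1 ≤ m p) (hle : ∀ p ∈ s, m p ≤ d - 1)
    (hsum : ∑ p ∈ s, m p = 3 * (d - 1)) :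
    ∃ T : Multiset (Multiset ι),
      Multiset.card T = d - 1 ∧
      (∀ t ∈ T, Multiset.card t = 3 ∧ t.Nodup) ∧
      T.sum = s.val.bind (fun p => Multiset.replicate (m p) p) := by
  have hbind : s.val.bind (fun p => Multiset.replicate (m p) p)
      = ∑ p ∈ s, Multiset.replicate (m p) p := rfl
  rw [hbind]
  exact aux13 ι (d - 1) s m hle hsum
end
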